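/- arXiv:2208.07126 — 8 statements merged into one kernel-verified Lean document; each statement's English description precedes it below -/
import Mathlib

section
/- The split equilibrium problem SEP(f,g,C,Q) is Levitin–Polyak well-posed by perturbations if and only if its solution set S is nonempty and diam(S(ε)) → 0 as ε → 0⁺. -/
/-! Both conditions say that the approximate solution sets `S(ε)` shrink to a single point as
`ε → 0⁺`. A generalized approximating sequence is, up to enlarging its tolerances to
`max εₙ ‖pₙ - p*‖`, the same thing as a choice `uₙ ∈ S(tₙ)` along positive `tₙ → 0`. Every
solution lies in every `S(ε)`, so if the diameters tend to `0`, such a sequence is squeezed onto a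
solution; conversely, two sequences `aₙ, bₙ ∈ S(tₙ)` staying `δ` apart would both have to converge
to the unique solution. Uniqueness of the solution comes from the constant sequences. -/

open Filter Metric Topology Set

/-- The solution set of the split equilibrium problem SEP(f,g,C,Q). -/
def SEPSol {E₁ E₂ : Type*} [NormedAddCommGroup E₁] [NormedSpace ℝ E₁]
    [NormedAddCommGroup E₂] [NormedSpace ℝ E₂]
    (C : Set E₁) (Q : Set E₂) (A : E₁ →L[ℝ] E₂)
    (f : E₁ → E₁ → ℝ) (g : E₂ → E₂ → ℝ) : Set (E₁ × E₂) :=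
  {u | u.1 ∈ C ∧ u.2 ∈ Q ∧ u.2 = A u.1 ∧
    (∀ x ∈ C, 0 ≤ f u.1 x) ∧ (∀ y ∈ Q, 0 ≤ g u.2 y)}

/-- The approximate solution set S(ε) of the perturbed split equilibrium problem,
where the perturbation parameter ranges over the closed ball M of radius `r`
centered at `pstar`, intersected with the closed ball of radius `ε` around `pstar`. -/
def approxSol {E₁ E₂ N : Type*} [NormedAddCommGroup E₁] [NormedSpace ℝ E₁]
    [NormedAddCommGroup E₂] [NormedSpace ℝ E₂] [NormedAddCommGroup N] [NormedSpace ℝ N]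
    (C : Set E₁) (Q : Set E₂) (A : E₁ →L[ℝ] E₂) (pstar : N) (r : ℝ)
    (ft : N → E₁ → E₁ → ℝ) (gt : N → E₂ → E₂ → ℝ) (ε : ℝ) : Set (E₁ × E₂) :=
  {u | ∃ p : N, ‖p - pstar‖ ≤ r ∧ ‖p - pstar‖ ≤ ε ∧
    infDist u.1 C ≤ ε ∧ infDist u.2 Q ≤ ε ∧ ‖u.2 - A u.1‖ ≤ ε ∧
    (∀ x ∈ C, -ε ≤ ft p u.1 x) ∧ (∀ y ∈ Q, -ε ≤ gt p u.2 y)}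

/-- `u` is a generalized approximating sequence corresponding to the parameter
sequence `p` (which lies in the ball M of radius `r` around `pstar` and converges
to `pstar`) for the split equilibrium problem. -/
def GenApproxSeq {E₁ E₂ N : Type*} [NormedAddCommGroup E₁] [NormedSpace ℝ E₁]
    [NormedAddCommGroup E₂] [NormedSpace ℝ E₂] [NormedAddCommGroup N] [NormedSpace ℝ N]
    (C : Set E₁) (Q : Set E₂) (A : E₁ →L[ℝ] E₂) (pstar : N) (r : ℝ)
    (ft : N → E₁ → E₁ → ℝ) (gt : N → E₂ → E₂ → ℝ)
    (p : ℕ → N) (u : ℕ → E₁ × E₂) : Prop :=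
  (∀ n, ‖p n - pstar‖ ≤ r) ∧ Tendsto p atTop (nhds pstar) ∧
  ∃ ε : ℕ → ℝ, (∀ n, 0 < ε n) ∧ Tendsto ε atTop (nhds 0) ∧
    ∀ n, infDist (u n).1 C ≤ ε n ∧ infDist (u n).2 Q ≤ ε n ∧
      ‖(u n).2 - A (u n).1‖ ≤ ε n ∧
      (∀ x ∈ C, -(ε n) ≤ ft (p n) (u n).1 x) ∧
      (∀ y ∈ Q, -(ε n) ≤ gt (p n) (u n).2 y)

/-- SEP(f,g,C,Q) is Levitin–Polyak well-posed by perturbations: the solution set is a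
singleton and every generalized approximating sequence converges to the unique solution. -/
def LPWellPosedPerturb {E₁ E₂ N : Type*} [NormedAddCommGroup E₁] [NormedSpace ℝ E₁]
    [NormedAddCommGroup E₂] [NormedSpace ℝ E₂] [NormedAddCommGroup N] [NormedSpace ℝ N]
    (C : Set E₁) (Q : Set E₂) (A : E₁ →L[ℝ] E₂) (pstar : N) (r : ℝ)
    (ft : N → E₁ → E₁ → ℝ) (gt : N → E₂ → E₂ → ℝ) : Prop :=
  ∃ ustar : E₁ × E₂, SEPSol C Q A (ft pstar) (gt pstar) = {ustar} ∧
    ∀ (p : ℕ → N) (u : ℕ → E₁ × E₂), GenApproxSeq C Q A pstar r ft gt p u →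
      Tendsto u atTop (nhds ustar)

/-- SEP(f,g,C,Q) is Levitin–Polyak well-posed by perturbations in the generalized sense:
the solution set is nonempty and every generalized approximating sequence has a
subsequence converging to some solution. -/
def GenLPWellPosedPerturb {E₁ E₂ N : Type*} [NormedAddCommGroup E₁] [NormedSpace ℝ E₁]
    [NormedAddCommGroup E₂] [NormedSpace ℝ E₂] [NormedAddCommGroup N] [NormedSpace ℝ N]
    (C : Set E₁) (Q : Set E₂) (A : E₁ →L[ℝ] E₂) (pstar : N) (r : ℝ)
    (ft : N → E₁ → E₁ → ℝ) (gt : N → E₂ → E₂ → ℝ) : Prop :=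
  (SEPSol C Q A (ft pstar) (gt pstar)).Nonempty ∧
    ∀ (p : ℕ → N) (u : ℕ → E₁ × E₂), GenApproxSeq C Q A pstar r ft gt p u →
      ∃ ustar ∈ SEPSol C Q A (ft pstar) (gt pstar), ∃ φ : ℕ → ℕ, StrictMono φ ∧
        Tendsto (u ∘ φ) atTop (nhds ustar)

/-- The Kuratowski measure of noncompactness: the infimum of all `ε > 0` such that the
set can be covered by finitely many sets, each of diameter `< ε`. -/
noncomputable def kuratowskiMNC {X : Type*} [PseudoEMetricSpace X] (s : Set X) : ENNReal :=
  sInf {ε : ENNReal | 0 < ε ∧ ∃ t : Finset (Set X), (s ⊆ ⋃ a ∈ t, (a : Set X)) ∧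
    ∀ a ∈ t, EMetric.diam a < ε}

def SeqTendstoAlongZero {X : Type*} [TopologicalSpace X] (F : ℝ → Set X) (x : X) : Prop :=
  ∀ (t : ℕ → ℝ) (u : ℕ → X), (∀ n, 0 < t n) → Tendsto t atTop (𝓝 0) →
    (∀ n, u n ∈ F (t n)) → Tendsto u atTop (𝓝 x)

theorem SeqTendstoAlongZero.eq {X : Type*} [TopologicalSpace X] [T2Space X]
    {F : ℝ → Set X} {x y : X}
    (hF : SeqTendstoAlongZero F x) (hy : ∀ ε > 0, y ∈ F ε) : y = x :=
  tendsto_nhds_unique tendsto_const_nhds <|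
    hF (fun n => 1 / (n + 1)) (fun _ => y) (fun _ => Nat.one_div_pos_of_nat)
      tendsto_one_div_add_atTop_nhds_zero_nat fun _ => hy _ Nat.one_div_pos_of_nat

section ShrinkingFamily

variable {X : Type*} [PseudoEMetricSpace X] {F : ℝ → Set X} {x : X}

theorem seqTendstoAlongZero_of_tendsto_ediam (hx : ∀ ε > 0, x ∈ F ε)
    (hF : Tendsto (fun ε => ediam (F ε)) (𝓝[>] 0) (𝓝 0)) :
    SeqTendstoAlongZero F x := by
  intro t u htpos ht hu
  have ht' : Tendsto t atTop (𝓝[>] 0) :=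
    tendsto_nhdsWithin_iff.2 ⟨ht, Eventually.of_forall htpos⟩
  rw [tendsto_iff_edist_tendsto_0]
  exact tendsto_of_tendsto_of_tendsto_of_le_of_le tendsto_const_nhds (hF.comp ht')
    (fun _ => zero_le) fun n => edist_le_ediam_of_mem (hu n) (hx _ (htpos n))

theorem tendsto_ediam_of_seqTendstoAlongZero (hF : SeqTendstoAlongZero F x) :
    Tendsto (fun ε => ediam (F ε)) (𝓝[>] 0) (𝓝 0) := by
  rw [ENNReal.tendsto_nhds_zero]
  intro δ hδ
  by_contra hfar
  obtain ⟨t, ht, hfar_t⟩ := exists_seq_forall_of_frequently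
    ((not_eventually.1 hfar).and_eventually self_mem_nhdsWithin)
  have htpos : ∀ n, 0 < t n := fun n => (hfar_t n).2
  have ht0 : Tendsto t atTop (𝓝 0) := ht.mono_right nhdsWithin_le_nhds
  have hpair : ∀ n, ∃ a ∈ F (t n), ∃ b ∈ F (t n), δ < edist a b := by
    intro n
    simpa [ediam_le_iff] using (hfar_t n).1
  choose a ha b hb hab using hpair
  have hab0 : Tendsto (fun n => edist (a n) (b n)) atTop (𝓝 0) := by
    simpa using (hF t a htpos ht0 ha).edist (hF t b htpos ht0 hb)
  obtain ⟨n, hn⟩ := (hab0.eventually_lt_const hδ).exists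
  exact (hab n).not_gt hn

theorem tendsto_ediam_iff_seqTendstoAlongZero (hx : ∀ ε > 0, x ∈ F ε) :
    Tendsto (fun ε => ediam (F ε)) (𝓝[>] 0) (𝓝 0) ↔ SeqTendstoAlongZero F x :=
  ⟨seqTendstoAlongZero_of_tendsto_ediam hx, tendsto_ediam_of_seqTendstoAlongZero⟩

end ShrinkingFamily

section SplitEquilibrium

variable {E₁ E₂ N : Type*} [NormedAddCommGroup E₁] [NormedSpace ℝ E₁]
  [NormedAddCommGroup E₂] [NormedSpace ℝ E₂] [NormedAddCommGroup N] [NormedSpace ℝ N]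
  {C : Set E₁} {Q : Set E₂} {A : E₁ →L[ℝ] E₂} {pstar : N} {r : ℝ}
  {ftil : N → E₁ → E₁ → ℝ} {gtil : N → E₂ → E₂ → ℝ}

theorem SEPSol_subset_approxSol (hr : 0 ≤ r) {ε : ℝ} (hε : 0 ≤ ε) :
    SEPSol C Q A (ftil pstar) (gtil pstar) ⊆ approxSol C Q A pstar r ftil gtil ε := by
  rintro ⟨z, w⟩ ⟨hz, hw, hA, hf, hg⟩
  refine ⟨pstar, by simpa using hr, by simpa using hε, ?_, ?_, by simpa [show w = A z from hA],
    fun x hx => (neg_nonpos.2 hε).trans (hf x hx), fun y hy => (neg_nonpos.2 hε).trans (hg y hy)⟩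
  · simpa [infDist_zero_of_mem hz] using hε
  · simpa [infDist_zero_of_mem hw] using hε

theorem GenApproxSeq.exists_mem_approxSol {p : ℕ → N} {u : ℕ → E₁ × E₂}
    (hu : GenApproxSeq C Q A pstar r ftil gtil p u) :
    ∃ t : ℕ → ℝ, (∀ n, 0 < t n) ∧ Tendsto t atTop (𝓝 0) ∧
      ∀ n, u n ∈ approxSol C Q A pstar r ftil gtil (t n) := by
  obtain ⟨hpr, hp, ε, hεpos, hε, hu⟩ := hu
  refine ⟨fun n => max (ε n) ‖p n - pstar‖, fun n => lt_max_of_lt_left (hεpos n), ?_,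
    fun n => ?_⟩
  · simpa using hε.max (tendsto_iff_norm_sub_tendsto_zero.1 hp)
  · obtain ⟨hC, hQ, hA, hf, hg⟩ := hu n
    have hε_le : ε n ≤ max (ε n) ‖p n - pstar‖ := le_max_left _ _
    have hneg := neg_le_neg hε_le
    exact ⟨p n, hpr n, le_max_right _ _, hC.trans hε_le, hQ.trans hε_le, hA.trans hε_le,
      fun x hx => hneg.trans (hf x hx), fun y hy => hneg.trans (hg y hy)⟩

theorem exists_genApproxSeq_of_mem_approxSol {t : ℕ → ℝ} {u : ℕ → E₁ × E₂}
    (htpos : ∀ n, 0 < t n) (ht : Tendsto t atTop (𝓝 0))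
    (hu : ∀ n, u n ∈ approxSol C Q A pstar r ftil gtil (t n)) :
    ∃ p, GenApproxSeq C Q A pstar r ftil gtil p u := by
  choose p hpr hpt hC hQ hA hf hg using hu
  refine ⟨p, hpr, ?_, t, htpos, ht, fun n => ⟨hC n, hQ n, hA n, hf n, hg n⟩⟩
  exact tendsto_iff_norm_sub_tendsto_zero.2 (squeeze_zero (fun _ => norm_nonneg _) hpt ht)

theorem forall_genApproxSeq_tendsto_iff {x : E₁ × E₂} :
    (∀ p u, GenApproxSeq C Q A pstar r ftil gtil p u → Tendsto u atTop (𝓝 x)) ↔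
      SeqTendstoAlongZero (approxSol C Q A pstar r ftil gtil) x := by
  constructor
  · intro h t u htpos ht hu
    obtain ⟨p, hp⟩ := exists_genApproxSeq_of_mem_approxSol htpos ht hu
    exact h p u hp
  · intro h p u hu
    obtain ⟨t, htpos, ht, hut⟩ := hu.exists_mem_approxSol
    exact h t u htpos ht hut

end SplitEquilibrium

theorem sep_lp_wellposed_iff_diam_tendsto_zero_general
    {E₁ E₂ N : Type*} [NormedAddCommGroup E₁] [NormedSpace ℝ E₁]
    [NormedAddCommGroup E₂] [NormedSpace ℝ E₂]
    [NormedAddCommGroup N] [NormedSpace ℝ N]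
    (C : Set E₁) (Q : Set E₂)
    (A : E₁ →L[ℝ] E₂) (pstar : N) (r : ℝ) (hr : 0 < r)
    (ftil : N → E₁ → E₁ → ℝ) (gtil : N → E₂ → E₂ → ℝ) :
    LPWellPosedPerturb C Q A pstar r ftil gtil ↔
      (SEPSol C Q A (ftil pstar) (gtil pstar)).Nonempty ∧
        Tendsto (fun ε : ℝ => EMetric.diam (approxSol C Q A pstar r ftil gtil ε))
          (𝓝[>] (0 : ℝ)) (nhds 0) := by
  have hsol : ∀ u ∈ SEPSol C Q A (ftil pstar) (gtil pstar), ∀ ε > 0,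
      u ∈ approxSol C Q A pstar r ftil gtil ε :=
    fun u hu ε hε => SEPSol_subset_approxSol hr.le hε.le hu
  constructor
  · rintro ⟨x, hS, hconv⟩
    have hx : x ∈ SEPSol C Q A (ftil pstar) (gtil pstar) := hS ▸ rfl
    exact ⟨⟨x, hx⟩, (tendsto_ediam_iff_seqTendstoAlongZero (hsol x hx)).2
      (forall_genApproxSeq_tendsto_iff.1 hconv)⟩
  · rintro ⟨⟨x, hx⟩, hdiam⟩
    have hconv := (tendsto_ediam_iff_seqTendstoAlongZero (hsol x hx)).1 hdiam
    exact ⟨x, eq_singleton_iff_unique_mem.2 ⟨hx, fun y hy => hconv.eq (hsol y hy)⟩,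
      forall_genApproxSeq_tendsto_iff.2 hconv⟩

/-- **Theorem 4.1.** SEP(f,g,C,Q) is Levitin–Polyak well-posed by perturbations if and
only if its solution set is nonempty and diam(S(ε)) → 0 as ε → 0⁺. -/
theorem sep_lp_wellposed_iff_diam_tendsto_zero
    {E₁ E₂ N : Type*} [NormedAddCommGroup E₁] [NormedSpace ℝ E₁] [CompleteSpace E₁]
    [NormedAddCommGroup E₂] [NormedSpace ℝ E₂] [CompleteSpace E₂]
    [NormedAddCommGroup N] [NormedSpace ℝ N]
    (C : Set E₁) (Q : Set E₂) (hCne : C.Nonempty) (hCcl : IsClosed C) (hCcv : Convex ℝ C)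
    (hQne : Q.Nonempty) (hQcl : IsClosed Q) (hQcv : Convex ℝ Q)
    (A : E₁ →L[ℝ] E₂) (pstar : N) (r : ℝ) (hr : 0 < r)
    (ftil : N → E₁ → E₁ → ℝ) (gtil : N → E₂ → E₂ → ℝ) :
    LPWellPosedPerturb C Q A pstar r ftil gtil ↔
      (SEPSol C Q A (ftil pstar) (gtil pstar)).Nonempty ∧
        Tendsto (fun ε : ℝ => EMetric.diam (approxSol C Q A pstar r ftil gtil ε))
          (𝓝[>] (0 : ℝ)) (nhds 0) :=
  sep_lp_wellposed_iff_diam_tendsto_zero_general C Q A pstar r hr ftil gtil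
end

section
/- Assume the parameter space N is finite-dimensional and that for each (x,y) ∈ E₁ × E₂ the functions (p,z) ↦ f̃(p,z,x) and (p,w) ↦ g̃(p,w,y) are upper semi-continuous (jointly in their first two variables). Then SEP(f,g,C,Q) is Levitin–Polyak well-posed by perturbations in the generalized sense if and only if S(ε) ≠ ∅ for every ε > 0 and the Kuratowski measure of noncompactness μ(S(ε)) → 0 as ε → 0⁺. -/
open Filter Metric Topology Set

section Auxiliary

lemma kuratowskiMNC_mono {X : Type*} [PseudoEMetricSpace X] {s t : Set X} (h : s ⊆ t) :
    kuratowskiMNC s ≤ kuratowskiMNC t :=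
  sInf_le_sInf (fun _ ⟨hε, T, hcov, hd⟩ => ⟨hε, T, h.trans hcov, hd⟩)

variable {E₁ E₂ N : Type*} [NormedAddCommGroup E₁] [NormedSpace ℝ E₁]
    [NormedAddCommGroup E₂] [NormedSpace ℝ E₂] [NormedAddCommGroup N] [NormedSpace ℝ N]
    {C : Set E₁} {Q : Set E₂} {A : E₁ →L[ℝ] E₂} {pstar : N} {r : ℝ}
    {ft : N → E₁ → E₁ → ℝ} {gt : N → E₂ → E₂ → ℝ}

lemma approxSol_mono {ε ε' : ℝ} (h : ε ≤ ε') :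
    approxSol C Q A pstar r ft gt ε ⊆ approxSol C Q A pstar r ft gt ε' := by
  rintro u ⟨p, h1, h2, h3, h4, h5, h6, h7⟩
  exact ⟨p, h1, h2.trans h, h3.trans h, h4.trans h, h5.trans h,
    fun x hx => le_trans (by linarith) (h6 x hx), fun y hy => le_trans (by linarith) (h7 y hy)⟩

lemma sep_subset_approxSol (hr : 0 ≤ r) {ε : ℝ} (hε : 0 ≤ ε) :
    SEPSol C Q A (ft pstar) (gt pstar) ⊆ approxSol C Q A pstar r ft gt ε := by
  rintro u ⟨h1, h2, h3, h4, h5⟩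
  refine ⟨pstar, by simpa using hr, by simpa using hε, ?_, ?_, ?_, ?_, ?_⟩
  · rw [infDist_zero_of_mem h1]; exact hε
  · rw [infDist_zero_of_mem h2]; exact hε
  · rw [sub_eq_zero.mpr h3, norm_zero]; exact hε
  · exact fun x hx => le_trans (by linarith) (h4 x hx)
  · exact fun y hy => le_trans (by linarith) (h5 y hy)

lemma limit_mem_SEPSol (hCne : C.Nonempty) (hCcl : IsClosed C)
    (hQne : Q.Nonempty) (hQcl : IsClosed Q)
    (hfusc : ∀ x : E₁, UpperSemicontinuous fun q : N × E₁ => ft q.1 q.2 x)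
    (hgusc : ∀ y : E₂, UpperSemicontinuous fun q : N × E₂ => gt q.1 q.2 y)
    (p : ℕ → N) (u : ℕ → E₁ × E₂) (δ : ℕ → ℝ)
    (hδ : Tendsto δ atTop (nhds 0)) (hp : Tendsto p atTop (nhds pstar))
    (ustar : E₁ × E₂) (hu : Tendsto u atTop (nhds ustar))
    (h : ∀ n, infDist (u n).1 C ≤ δ n ∧ infDist (u n).2 Q ≤ δ n ∧
      ‖(u n).2 - A (u n).1‖ ≤ δ n ∧
      (∀ x ∈ C, -(δ n) ≤ ft (p n) (u n).1 x) ∧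
      (∀ y ∈ Q, -(δ n) ≤ gt (p n) (u n).2 y)) :
    ustar ∈ SEPSol C Q A (ft pstar) (gt pstar) := by
  have hu1 : Tendsto (fun n => (u n).1) atTop (nhds ustar.1) :=
    (continuous_fst.tendsto ustar).comp hu
  have hu2 : Tendsto (fun n => (u n).2) atTop (nhds ustar.2) :=
    (continuous_snd.tendsto ustar).comp hu
  have hmemC : ustar.1 ∈ C := by
    rw [hCcl.mem_iff_infDist_zero hCne]
    refine le_antisymm ?_ infDist_nonneg
    exact le_of_tendsto_of_tendsto' (((continuous_infDist_pt C).tendsto ustar.1).comp hu1) hδ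
      (fun n => (h n).1)
  have hmemQ : ustar.2 ∈ Q := by
    rw [hQcl.mem_iff_infDist_zero hQne]
    refine le_antisymm ?_ infDist_nonneg
    exact le_of_tendsto_of_tendsto' (((continuous_infDist_pt Q).tendsto ustar.2).comp hu2) hδ
      (fun n => (h n).2.1)
  have hAx : ustar.2 = A ustar.1 := by
    have hnorm : Tendsto (fun n => ‖(u n).2 - A (u n).1‖) atTop
        (nhds ‖ustar.2 - A ustar.1‖) :=
      (hu2.sub ((A.continuous.tendsto ustar.1).comp hu1)).norm
    have : ‖ustar.2 - A ustar.1‖ ≤ 0 :=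
      le_of_tendsto_of_tendsto' hnorm hδ (fun n => (h n).2.2.1)
    have := le_antisymm this (norm_nonneg _)
    rwa [norm_eq_zero, sub_eq_zero] at this
  refine ⟨hmemC, hmemQ, hAx, ?_, ?_⟩
  · intro x hx
    by_contra hneg
    push_neg at hneg
    have hq : Tendsto (fun n => (p n, (u n).1)) atTop (nhds (pstar, ustar.1)) :=
      hp.prodMk_nhds hu1
    have hev : ∀ᶠ n in atTop, ft (p n) (u n).1 x < ft pstar ustar.1 x / 2 :=
      hq.eventually (hfusc x (pstar, ustar.1) (ft pstar ustar.1 x / 2) (by linarith))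
    have hev2 : ∀ᶠ n in atTop, ft pstar ustar.1 x / 2 < -(δ n) := by
      have : Tendsto (fun n => -(δ n)) atTop (nhds 0) := by simpa using hδ.neg
      exact this.eventually (eventually_gt_nhds (by linarith))
    obtain ⟨n, h1, h2⟩ := (hev.and hev2).exists
    exact absurd ((h n).2.2.2.1 x hx) (by linarith)
  · intro y hy
    by_contra hneg
    push_neg at hneg
    have hq : Tendsto (fun n => (p n, (u n).2)) atTop (nhds (pstar, ustar.2)) :=
      hp.prodMk_nhds hu2
    have hev : ∀ᶠ n in atTop, gt (p n) (u n).2 y < gt pstar ustar.2 y / 2 :=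
      hq.eventually (hgusc y (pstar, ustar.2) (gt pstar ustar.2 y / 2) (by linarith))
    have hev2 : ∀ᶠ n in atTop, gt pstar ustar.2 y / 2 < -(δ n) := by
      have : Tendsto (fun n => -(δ n)) atTop (nhds 0) := by simpa using hδ.neg
      exact this.eventually (eventually_gt_nhds (by linarith))
    obtain ⟨n, h1, h2⟩ := (hev.and hev2).exists
    exact absurd ((h n).2.2.2.2 y hy) (by linarith)

lemma approx_seq_subconv [CompleteSpace E₁] [CompleteSpace E₂]
    (hCne : C.Nonempty) (hCcl : IsClosed C) (hQne : Q.Nonempty) (hQcl : IsClosed Q)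
    (hfusc : ∀ x : E₁, UpperSemicontinuous fun q : N × E₁ => ft q.1 q.2 x)
    (hgusc : ∀ y : E₂, UpperSemicontinuous fun q : N × E₂ => gt q.1 q.2 y)
    (hμ : Tendsto (fun ε : ℝ => kuratowskiMNC (approxSol C Q A pstar r ft gt ε))
      (nhdsWithin 0 (Ioi 0)) (nhds 0))
    (δ : ℕ → ℝ) (hδ0 : Tendsto δ atTop (nhds 0))
    (u : ℕ → E₁ × E₂) (hu : ∀ n, u n ∈ approxSol C Q A pstar r ft gt (δ n)) :
    ∃ ustar ∈ SEPSol C Q A (ft pstar) (gt pstar), ∃ φ : ℕ → ℕ, StrictMono φ ∧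
      Tendsto (u ∘ φ) atTop (nhds ustar) := by
  -- Step 1: the range of u is totally bounded.
  have htb : TotallyBounded (range u) := by
    rw [EMetric.totallyBounded_iff]
    intro c hc
    set c' : ENNReal := min c 1 with hc'def
    have hc' : 0 < c' := lt_min hc zero_lt_one
    have hc'top : c' ≠ ⊤ := ne_top_of_le_ne_top ENNReal.one_ne_top (min_le_right _ _)
    have hev := (ENNReal.tendsto_nhds_zero.mp hμ (c' / 2) (ENNReal.half_pos hc'.ne'))
    obtain ⟨ε₀, hε₀mem, hμε₀⟩ := (eventually_mem_nhdsWithin.and hev).exists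
    have hε₀pos : (0:ℝ) < ε₀ := hε₀mem
    have hlt : kuratowskiMNC (approxSol C Q A pstar r ft gt ε₀) < c' :=
      lt_of_le_of_lt hμε₀ (ENNReal.half_lt_self hc'.ne' hc'top)
    obtain ⟨e, ⟨hepos, T, hcov, hdiam⟩, helt⟩ := sInf_lt_iff.mp hlt
    obtain ⟨M, hM⟩ := eventually_atTop.mp (hδ0.eventually (eventually_lt_nhds hε₀pos))
    classical
    set ctr : Set (E₁ × E₂) → E₁ × E₂ :=
      fun a => if h : a.Nonempty then h.some else (0, 0) with hctr
    refine ⟨(ctr '' (T : Set (Set (E₁ × E₂)))) ∪ (u '' Iio M),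
      (T.finite_toSet.image ctr).union ((finite_Iio M).image u), ?_⟩
    rintro z ⟨n, rfl⟩
    rcases lt_or_ge n M with hn | hn
    · exact mem_iUnion₂.mpr ⟨u n, Or.inr ⟨n, hn, rfl⟩, EMetric.mem_ball_self hc⟩
    · have hmem : u n ∈ approxSol C Q A pstar r ft gt ε₀ :=
        approxSol_mono (hM n hn).le (hu n)
      obtain ⟨a, haT, hain⟩ := mem_iUnion₂.mp (hcov hmem)
      have hane : a.Nonempty := ⟨u n, hain⟩
      have hctra : ctr a ∈ a := by rw [hctr]; simp only [dif_pos hane]; exact hane.some_mem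
      refine mem_iUnion₂.mpr ⟨ctr a, Or.inl ⟨a, haT, rfl⟩, ?_⟩
      calc edist (u n) (ctr a) ≤ EMetric.diam a := EMetric.edist_le_diam_of_mem hain hctra
        _ < e := hdiam a haT
        _ < c' := helt
        _ ≤ c := min_le_left _ _
  -- Step 2: closure of the range is compact, extract a convergent subsequence.
  have hK : IsCompact (closure (range u)) :=
    TotallyBounded.isCompact_of_isClosed htb.closure isClosed_closure
  obtain ⟨ustar, _, φ, hφ, hconv⟩ :=
    hK.tendsto_subseq (fun n => subset_closure (mem_range_self n))
  -- Step 3: the limit is a solution.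
  choose P hP1 hP2 hP3 hP4 hP5 hP6 hP7 using hu
  have hPt : Tendsto P atTop (nhds pstar) := by
    rw [← tendsto_sub_nhds_zero_iff, tendsto_zero_iff_norm_tendsto_zero]
    exact squeeze_zero (fun n => norm_nonneg _) hP2 hδ0
  have hδφ : Tendsto (δ ∘ φ) atTop (nhds 0) := hδ0.comp hφ.tendsto_atTop
  have hPφ : Tendsto (P ∘ φ) atTop (nhds pstar) := hPt.comp hφ.tendsto_atTop
  refine ⟨ustar, ?_, φ, hφ, hconv⟩
  exact limit_mem_SEPSol hCne hCcl hQne hQcl hfusc hgusc (P ∘ φ) (u ∘ φ) (δ ∘ φ)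
    hδφ hPφ ustar hconv
    (fun n => ⟨hP3 (φ n), hP4 (φ n), hP5 (φ n), hP6 (φ n), hP7 (φ n)⟩)

end Auxiliary

/-- **Theorem 4.4.** If the parameter space is finite-dimensional and the perturbed
bifunctions are upper semicontinuous in their first two variables, then SEP(f,g,C,Q) is
Levitin–Polyak well-posed by perturbations in the generalized sense if and only if
S(ε) ≠ ∅ for every ε > 0 and μ(S(ε)) → 0 as ε → 0⁺. -/
theorem sep_gen_lp_wellposed_iff_kuratowski_tendsto_zero
    {E₁ E₂ N : Type*} [NormedAddCommGroup E₁] [NormedSpace ℝ E₁] [CompleteSpace E₁]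
    [NormedAddCommGroup E₂] [NormedSpace ℝ E₂] [CompleteSpace E₂]
    [NormedAddCommGroup N] [NormedSpace ℝ N]
    (C : Set E₁) (Q : Set E₂) (hCne : C.Nonempty) (hCcl : IsClosed C) (hCcv : Convex ℝ C)
    (hQne : Q.Nonempty) (hQcl : IsClosed Q) (hQcv : Convex ℝ Q)
    (A : E₁ →L[ℝ] E₂) (pstar : N) (r : ℝ) (hr : 0 < r)
    (ftil : N → E₁ → E₁ → ℝ) (gtil : N → E₂ → E₂ → ℝ)
    [FiniteDimensional ℝ N]
    (hfusc : ∀ x : E₁, UpperSemicontinuous fun q : N × E₁ => ftil q.1 q.2 x)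
    (hgusc : ∀ y : E₂, UpperSemicontinuous fun q : N × E₂ => gtil q.1 q.2 y) :
    GenLPWellPosedPerturb C Q A pstar r ftil gtil ↔
      (∀ ε : ℝ, 0 < ε → (approxSol C Q A pstar r ftil gtil ε).Nonempty) ∧
        Tendsto (fun ε : ℝ => kuratowskiMNC (approxSol C Q A pstar r ftil gtil ε))
          (𝓝[>] (0 : ℝ)) (nhds 0) := by
  constructor
  · rintro ⟨hSne, hseq⟩
    have honen : ∀ n : ℕ, (0:ℝ) < 1 / (n + 1) := fun n => by positivity
    constructor
    · intro ε hε
      obtain ⟨s, hs⟩ := hSne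
      exact ⟨s, sep_subset_approxSol hr.le hε.le hs⟩
    -- every sequence in the solution set has a convergent subsequence with limit in it
    · have hseqcpt : IsSeqCompact (SEPSol C Q A (ftil pstar) (gtil pstar)) := by
        intro v hv
        refine hseq (fun _ => pstar) v ⟨fun n => by simpa using hr.le, tendsto_const_nhds,
          fun n => 1 / (n + 1), honen, tendsto_one_div_add_atTop_nhds_zero_nat, fun n => ?_⟩
        obtain ⟨h1, h2, h3, h4, h5⟩ := hv n
        refine ⟨by rw [infDist_zero_of_mem h1]; exact (honen n).le,
          by rw [infDist_zero_of_mem h2]; exact (honen n).le,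
          by rw [sub_eq_zero.mpr h3, norm_zero]; exact (honen n).le,
          fun x hx => le_trans (by linarith [honen n]) (h4 x hx),
          fun y hy => le_trans (by linarith [honen n]) (h5 y hy)⟩
      have htb : TotallyBounded (SEPSol C Q A (ftil pstar) (gtil pstar)) :=
        hseqcpt.totallyBounded
      -- the key approximation property
      have hstar : ∀ ρ > (0:ℝ), ∃ ε₀ > (0:ℝ),
          ∀ u ∈ approxSol C Q A pstar r ftil gtil ε₀,
            infDist u (SEPSol C Q A (ftil pstar) (gtil pstar)) ≤ ρ := by
        by_contra hcon
        push_neg at hcon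
        obtain ⟨ρ, hρ, hbad⟩ := hcon
        choose v hv1 hv2 using fun n : ℕ => hbad (1 / (n + 1)) (honen n)
        choose P hP1 hP2 hP3 hP4 hP5 hP6 hP7 using hv1
        have hPt : Tendsto P atTop (nhds pstar) := by
          rw [← tendsto_sub_nhds_zero_iff, tendsto_zero_iff_norm_tendsto_zero]
          exact squeeze_zero (fun n => norm_nonneg _) hP2
            tendsto_one_div_add_atTop_nhds_zero_nat
        obtain ⟨ustar, hustar, φ, hφ, hconv⟩ := hseq P v ⟨hP1, hPt,
          fun n => 1 / (n + 1), honen, tendsto_one_div_add_atTop_nhds_zero_nat,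
          fun n => ⟨hP3 n, hP4 n, hP5 n, hP6 n, hP7 n⟩⟩
        have hlim : Tendsto (fun n => infDist (v (φ n))
            (SEPSol C Q A (ftil pstar) (gtil pstar))) atTop (nhds 0) := by
          have := ((continuous_infDist_pt
            (SEPSol C Q A (ftil pstar) (gtil pstar))).tendsto ustar).comp hconv
          rwa [infDist_zero_of_mem hustar] at this
        have : ρ ≤ 0 := le_of_tendsto_of_tendsto' tendsto_const_nhds hlim
          (fun n => (hv2 (φ n)).le)
        linarith
      -- prove the measure of noncompactness tends to zero
      rw [ENNReal.tendsto_nhds_zero]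
      intro c hc
      rcases eq_or_ne c ⊤ with rfl | hctop
      · exact Eventually.of_forall (fun _ => le_top)
      have hcr : 0 < c.toReal := ENNReal.toReal_pos hc.ne' hctop
      set ρ : ℝ := c.toReal / 7 with hρdef
      have hρ : 0 < ρ := by positivity
      obtain ⟨t, htfin, hcov⟩ := totallyBounded_iff.mp htb ρ hρ
      obtain ⟨ε₀, hε₀, hnear⟩ := hstar ρ hρ
      classical
      have hbound : kuratowskiMNC (approxSol C Q A pstar r ftil gtil ε₀) ≤ c := by
        apply sInf_le
        refine ⟨hc, htfin.toFinset.image (fun y => ball y (3 * ρ)), ?_, ?_⟩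
        · intro u hu
          have hlt : infDist u (SEPSol C Q A (ftil pstar) (gtil pstar)) < 2 * ρ :=
            lt_of_le_of_lt (hnear u hu) (by linarith)
          obtain ⟨s, hsS, hds⟩ := (infDist_lt_iff hSne).mp hlt
          obtain ⟨y, hyt, hsy⟩ := by
            have := hcov hsS
            simpa only [mem_iUnion₂, mem_ball] using this
          refine mem_iUnion₂.mpr ⟨ball y (3 * ρ), ?_, ?_⟩
          · simp only [Finset.mem_image, Finite.mem_toFinset]
            exact ⟨y, hyt, rfl⟩
          · have : dist u y < 3 * ρ := by
              calc dist u y ≤ dist u s + dist s y := dist_triangle _ _ _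
                _ < 3 * ρ := by linarith
            exact mem_ball.mpr this
        · intro a ha
          simp only [Finset.mem_image, Finite.mem_toFinset] at ha
          obtain ⟨y, _, rfl⟩ := ha
          have hd : EMetric.diam (ball y (3 * ρ)) ≤ ENNReal.ofReal (6 * ρ) := by
            apply EMetric.diam_le
            intro x hx z hz
            rw [edist_dist]
            apply ENNReal.ofReal_le_ofReal
            calc dist x z ≤ dist x y + dist y z := dist_triangle _ _ _
              _ ≤ 6 * ρ := by
                have h1 := mem_ball.mp hx
                have h2 := mem_ball.mp hz
                rw [dist_comm y z] at *
                linarith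
          refine lt_of_le_of_lt hd ?_
          have : ENNReal.ofReal (6 * ρ) < ENNReal.ofReal c.toReal := by
            rw [ENNReal.ofReal_lt_ofReal_iff hcr, hρdef]; linarith
          rwa [ENNReal.ofReal_toReal hctop] at this
      filter_upwards [Ioo_mem_nhdsGT_of_mem (show (0:ℝ) ∈ Ico 0 ε₀ from ⟨le_refl _, hε₀⟩)]
        with ε hε
      exact le_trans (kuratowskiMNC_mono (approxSol_mono hε.2.le)) hbound
  · rintro ⟨hne, hμ⟩
    have honen : ∀ n : ℕ, (0:ℝ) < 1 / (n + 1) := fun n => by positivity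
    constructor
    · choose v hv using fun n : ℕ => hne (1 / (n + 1)) (honen n)
      obtain ⟨ustar, hustar, _⟩ := approx_seq_subconv hCne hCcl hQne hQcl hfusc hgusc hμ
        (fun n => 1 / (n + 1)) tendsto_one_div_add_atTop_nhds_zero_nat v hv
      exact ⟨ustar, hustar⟩
    · rintro p u ⟨hpr, hp, ε, hεpos, hε0, hcond⟩
      set δ : ℕ → ℝ := fun n => max (ε n) ‖p n - pstar‖ with hδdef
      have hnorm0 : Tendsto (fun n => ‖p n - pstar‖) atTop (nhds 0) := by
        have := (tendsto_sub_nhds_zero_iff.mpr hp).norm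
        simpa using this
      have hδ0 : Tendsto δ atTop (nhds 0) := by
        have := hε0.max hnorm0
        simpa using this
      have hu : ∀ n, u n ∈ approxSol C Q A pstar r ftil gtil (δ n) := by
        intro n
        obtain ⟨h1, h2, h3, h4, h5⟩ := hcond n
        exact ⟨p n, hpr n, le_max_right _ _, h1.trans (le_max_left _ _),
          h2.trans (le_max_left _ _), h3.trans (le_max_left _ _),
          fun x hx => le_trans (neg_le_neg (le_max_left _ _)) (h4 x hx),
          fun y hy => le_trans (neg_le_neg (le_max_left _ _)) (h5 y hy)⟩
      exact approx_seq_subconv hCne hCcl hQne hQcl hfusc hgusc hμ δ hδ0 u hu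
end

section
/- Assume E₁ and E₂ are finite-dimensional, and that: (i) f̃(p*,·,·) and g̃(p*,·,·) are hemicontinuous; (ii) f̃(p,·,·) and g̃(p,·,·) are monotone for every p ∈ M; (iii) for every p ∈ M and every x ∈ E₁, y ∈ E₂, the functions f̃(p,x,·) and g̃(p,y,·) are convex; (iv) f̃(p*,x,x) ≥ 0 for every x ∈ C and g̃(p*,y,y) ≥ 0 for every y ∈ Q; (v) for every x ∈ E₁ and y ∈ E₂, the maps (p,x') ↦ f̃(p,x,x') and (p,y') ↦ g̃(p,y,y') are continuous. Then SEP(f,g,C,Q) is Levitin–Polyak well-posed by perturbations if and only if SEP(f,g,C,Q) has a unique solution. -/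
open Filter Metric Topology Set

/-!
If the split problem has a unique solution `u*`, take a generalized approximating sequence `uₙ`
that does not converge to `u*`. Rescaling the far terms towards `u*` onto a sphere of fixed
radius `η` keeps them approximating, by convexity of `C`, `Q` and of the bifunctions and by
monotonicity, and finite dimensionality lets them converge along a subsequence. Their limit
solves the Minty (dual) problem of the unperturbed bifunctions, by continuity in the parameter,
hence the split problem itself, by hemicontinuity. It lies at distance `η` from `u*`,
contradicting uniqueness.
-/

theorem limsup_nonneg_of_eventually_nonneg {α : Type*} {l : Filter α} [l.NeBot] {F : α → ℝ}
    (h : ∀ᶠ a in l, 0 ≤ F a) : 0 ≤ limsup F l := by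
  by_cases hF : IsBoundedUnder (· ≤ ·) l F
  · exact le_limsup_of_frequently_le h.frequently hF
  · -- the limsup of an unbounded real function is the junk value `sInf ∅ = 0`
    rw [limsup_eq, show {a | ∀ᶠ x in l, F x ≤ a} = ∅ from
      eq_empty_of_forall_notMem fun a ha => hF ⟨a, ha⟩, Real.sInf_empty]

theorem IsClosed.mem_of_tendsto_infDist {α ι : Type*} [PseudoMetricSpace α] {l : Filter ι}
    [l.NeBot] {s : Set α} (hs : IsClosed s) (hne : s.Nonempty) {w : ι → α} {x : α}
    (hw : Tendsto w l (𝓝 x)) (hd : Tendsto (fun i => infDist (w i) s) l (𝓝 0)) : x ∈ s :=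
  (hs.mem_iff_infDist_zero hne).2 <|
    tendsto_nhds_unique (((continuous_infDist_pt s).tendsto x).comp hw) hd

section Equilibrium

variable {E : Type*} [NormedAddCommGroup E] [NormedSpace ℝ E] {C : Set E}

theorem Convex.infDist_add_smul_sub_le (hC : Convex ℝ C) {x : E} (hx : x ∈ C) (v : E)
    {t : ℝ} (ht : t ∈ Icc (0 : ℝ) 1) : infDist (x + t • (v - x)) C ≤ t * infDist v C := by
  have : Nonempty C := ⟨⟨x, hx⟩⟩
  rw [infDist_eq_iInf (x := v), Real.mul_iInf_of_nonneg ht.1]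
  refine le_ciInf fun c => ?_
  calc infDist (x + t • (v - x)) C ≤ dist (x + t • (v - x)) (x + t • (c - x)) :=
        infDist_le_dist_of_mem (hC.add_smul_sub_mem hx c.2 ht)
    _ = t * dist v c := by
        rw [dist_add_left, dist_smul₀, dist_sub_right, Real.norm_of_nonneg ht.1]

/-- Minty's lemma. -/
theorem forall_nonneg_of_forall_flip_nonpos {f : E → E → ℝ} (hC : Convex ℝ C)
    (hhemi : ∀ x y, limsup (fun t : ℝ => f (x + t • (y - x)) y) (𝓝[>] 0) ≤ f x y)
    (hconv : ∀ x, ConvexOn ℝ C (f x)) (hdiag : ∀ x ∈ C, 0 ≤ f x x)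
    {u : E} (hu : u ∈ C) (hdual : ∀ x ∈ C, f x u ≤ 0) : ∀ x ∈ C, 0 ≤ f u x := by
  intro x hx
  refine (limsup_nonneg_of_eventually_nonneg ?_).trans (hhemi u x)
  filter_upwards [Ioc_mem_nhdsGT zero_lt_one] with t ht
  set xt := u + t • (x - u)
  have hxt : xt ∈ C := hC.add_smul_sub_mem hu hx (Ioc_subset_Icc_self ht)
  have hsplit : f xt xt ≤ (1 - t) * f xt u + t * f xt x := by
    have h := (hconv xt).2 hu hx (sub_nonneg.2 ht.2) ht.1.le (sub_add_cancel 1 t)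
    rwa [show (1 - t) • u + t • x = xt by module, smul_eq_mul, smul_eq_mul] at h
  nlinarith [hdiag xt hxt, hdual xt hxt, ht.1, ht.2]

theorem flip_le_of_forall_neg_le {F : E → E → ℝ} (hmono : ∀ x y, F x y + F y x ≤ 0)
    (hconv : ∀ x, ConvexOn ℝ univ (F x)) {δ : ℝ} {v : E} (hv : ∀ x ∈ C, -δ ≤ F v x)
    (xstar : E) {t : ℝ} (ht : t ∈ Icc (0 : ℝ) 1) {x : E} (hx : x ∈ C) :
    F x (xstar + t • (v - xstar)) ≤ (1 - t) * F x xstar + t * δ := by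
  have hconvex := (hconv x).2 (mem_univ xstar) (mem_univ v) (sub_nonneg.2 ht.2) ht.1
    (sub_add_cancel 1 t)
  rw [show (1 - t) • xstar + t • v = xstar + t • (v - xstar) by module, smul_eq_mul,
    smul_eq_mul] at hconvex
  have hFv : F x v ≤ δ := by linarith [hmono v x, hv x hx]
  nlinarith [ht.1]

theorem flip_nonpos_of_tendsto_rescaled {N : Type*} [TopologicalSpace N]
    {f : N → E → E → ℝ} {pstar : N} (hcont : ∀ x, Continuous fun q : N × E => f q.1 x q.2)
    {q : ℕ → N} (hq : Tendsto q atTop (𝓝 pstar))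
    (hmono : ∀ n x y, f (q n) x y + f (q n) y x ≤ 0)
    (hconv : ∀ n x, ConvexOn ℝ univ (f (q n) x))
    {δ : ℕ → ℝ} (hδ : Tendsto δ atTop (𝓝 0)) {v : ℕ → E}
    (hv : ∀ n, ∀ x ∈ C, -δ n ≤ f (q n) (v n) x)
    {xstar : E} (hstar : ∀ x ∈ C, f pstar x xstar ≤ 0)
    {t : ℕ → ℝ} {τ : ℝ} (ht : ∀ n, t n ∈ Icc (0 : ℝ) 1) (htτ : Tendsto t atTop (𝓝 τ))
    {w : E} (hw : Tendsto (fun n => xstar + t n • (v n - xstar)) atTop (𝓝 w)) :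
    ∀ x ∈ C, f pstar x w ≤ 0 := by
  intro x hx
  have hτ : τ ≤ 1 := le_of_tendsto' htτ fun n => (ht n).2
  have hlhs : Tendsto (fun n => f (q n) x (xstar + t n • (v n - xstar))) atTop
      (𝓝 (f pstar x w)) :=
    ((hcont x).tendsto (pstar, w)).comp (hq.prodMk_nhds hw)
  have hrhs : Tendsto (fun n => (1 - t n) * f (q n) x xstar + t n * δ n) atTop
      (𝓝 ((1 - τ) * f pstar x xstar + τ * 0)) :=
    ((tendsto_const_nhds.sub htτ).mul
      (((hcont x).tendsto (pstar, xstar)).comp (hq.prodMk_nhds tendsto_const_nhds))).add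
      (htτ.mul hδ)
  calc f pstar x w ≤ (1 - τ) * f pstar x xstar + τ * 0 :=
        le_of_tendsto_of_tendsto' hlhs hrhs fun n =>
          flip_le_of_forall_neg_le (hmono n) (hconv n) (hv n) xstar (ht n) hx
    _ ≤ 0 := by
        rw [mul_zero, add_zero]
        exact mul_nonpos_of_nonneg_of_nonpos (by linarith) (hstar x hx)

end Equilibrium

/-- Hypotheses (i)–(v) on one component of the perturbed split problem. -/
structure RegularPerturbation {E N : Type*} [NormedAddCommGroup E] [NormedSpace ℝ E]
    [NormedAddCommGroup N] (C : Set E) (f : N → E → E → ℝ) (pstar : N) (r : ℝ) : Prop where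
  hemicontinuous : ∀ x y : E,
    limsup (fun t : ℝ => f pstar (x + t • (y - x)) y) (𝓝[>] (0 : ℝ)) ≤ f pstar x y
  monotone : ∀ p : N, ‖p - pstar‖ ≤ r → ∀ x y : E, f p x y + f p y x ≤ 0
  convexOn : ∀ p : N, ‖p - pstar‖ ≤ r → ∀ x : E, ConvexOn ℝ univ (f p x)
  diag_nonneg : ∀ x ∈ C, 0 ≤ f pstar x x
  continuous : ∀ x : E, Continuous fun q : N × E => f q.1 x q.2

theorem RegularPerturbation.mem_sol_of_tendsto_rescaled {E N : Type*} [NormedAddCommGroup E]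
    [NormedSpace ℝ E] [NormedAddCommGroup N] {C : Set E} {f : N → E → E → ℝ} {pstar : N}
    {r : ℝ} (hf : RegularPerturbation C f pstar r) (hr : 0 ≤ r) (hCcl : IsClosed C)
    (hCcv : Convex ℝ C) {xstar : E} (hxC : xstar ∈ C) (hxsol : ∀ x ∈ C, 0 ≤ f pstar xstar x)
    {q : ℕ → N} (hqr : ∀ n, ‖q n - pstar‖ ≤ r) (hq : Tendsto q atTop (𝓝 pstar))
    {δ : ℕ → ℝ} (hδ : Tendsto δ atTop (𝓝 0)) {v : ℕ → E} (hvC : ∀ n, infDist (v n) C ≤ δ n)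
    (hv : ∀ n, ∀ x ∈ C, -δ n ≤ f (q n) (v n) x)
    {t : ℕ → ℝ} {τ : ℝ} (ht : ∀ n, t n ∈ Icc (0 : ℝ) 1) (htτ : Tendsto t atTop (𝓝 τ))
    {w : E} (hw : Tendsto (fun n => xstar + t n • (v n - xstar)) atTop (𝓝 w)) :
    w ∈ C ∧ ∀ x ∈ C, 0 ≤ f pstar w x := by
  have hpstar : ‖pstar - pstar‖ ≤ r := by rwa [sub_self, norm_zero]
  have hwC : w ∈ C := by
    refine hCcl.mem_of_tendsto_infDist ⟨xstar, hxC⟩ hw <|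
      squeeze_zero (fun _ => infDist_nonneg) (fun n => ?_) hδ
    calc infDist (xstar + t n • (v n - xstar)) C ≤ t n * infDist (v n) C :=
          hCcv.infDist_add_smul_sub_le hxC (v n) (ht n)
      _ ≤ δ n := (mul_le_of_le_one_left infDist_nonneg (ht n).2).trans (hvC n)
  have hdual : ∀ x ∈ C, f pstar x w ≤ 0 :=
    flip_nonpos_of_tendsto_rescaled hf.continuous hq (fun n => hf.monotone _ (hqr n))
      (fun n => hf.convexOn _ (hqr n)) hδ hv
      (fun x hx => by linarith [hf.monotone pstar hpstar x xstar, hxsol x hx]) ht htτ hw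
  exact ⟨hwC, forall_nonneg_of_forall_flip_nonpos hCcv hf.hemicontinuous
    (fun x => (hf.convexOn pstar hpstar x).subset (subset_univ C) hCcv) hf.diag_nonneg hwC hdual⟩

namespace GenApproxSeq

variable {E₁ E₂ N : Type*} [NormedAddCommGroup E₁] [NormedSpace ℝ E₁]
  [NormedAddCommGroup E₂] [NormedSpace ℝ E₂] [NormedAddCommGroup N] [NormedSpace ℝ N]
  {C : Set E₁} {Q : Set E₂} {A : E₁ →L[ℝ] E₂} {pstar : N} {r : ℝ}
  {f : N → E₁ → E₁ → ℝ} {g : N → E₂ → E₂ → ℝ} {p : ℕ → N} {u : ℕ → E₁ × E₂}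

theorem comp (hu : GenApproxSeq C Q A pstar r f g p u) {σ : ℕ → ℕ}
    (hσ : Tendsto σ atTop atTop) : GenApproxSeq C Q A pstar r f g (p ∘ σ) (u ∘ σ) := by
  obtain ⟨hpr, hp, ε, hεpos, hε, hu⟩ := hu
  exact ⟨fun n => hpr (σ n), hp.comp hσ, ε ∘ σ, fun n => hεpos (σ n), hε.comp hσ,
    fun n => hu (σ n)⟩

theorem mem_SEPSol_of_tendsto_rescaled (hu : GenApproxSeq C Q A pstar r f g p u)
    (hf : RegularPerturbation C f pstar r) (hg : RegularPerturbation Q g pstar r) (hr : 0 ≤ r)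
    (hCcl : IsClosed C) (hCcv : Convex ℝ C) (hQcl : IsClosed Q) (hQcv : Convex ℝ Q)
    {ustar : E₁ × E₂} (hstar : ustar ∈ SEPSol C Q A (f pstar) (g pstar))
    {t : ℕ → ℝ} {τ : ℝ} (ht : ∀ n, t n ∈ Icc (0 : ℝ) 1) (htτ : Tendsto t atTop (𝓝 τ))
    {z : E₁ × E₂} (hz : Tendsto (fun n => ustar + t n • (u n - ustar)) atTop (𝓝 z)) :
    z ∈ SEPSol C Q A (f pstar) (g pstar) := by
  obtain ⟨hxC, hyQ, hyA, hfsol, hgsol⟩ := hstar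
  obtain ⟨hpr, hp, ε, -, hε, hu⟩ := hu
  obtain ⟨hz₁C, hz₁sol⟩ := hf.mem_sol_of_tendsto_rescaled hr hCcl hCcv hxC hfsol hpr hp hε
    (fun n => (hu n).1) (fun n => (hu n).2.2.2.1) ht htτ hz.fst_nhds
  obtain ⟨hz₂Q, hz₂sol⟩ := hg.mem_sol_of_tendsto_rescaled hr hQcl hQcv hyQ hgsol hpr hp hε
    (fun n => (hu n).2.1) (fun n => (hu n).2.2.2.2) ht htτ hz.snd_nhds
  refine ⟨hz₁C, hz₂Q, ?_, hz₁sol, hz₂sol⟩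
  have hresidual : Tendsto (fun n => (ustar + t n • (u n - ustar)).2
      - A (ustar + t n • (u n - ustar)).1) atTop (𝓝 0) := by
    refine squeeze_zero_norm (fun n => ?_) hε
    have hscale : (ustar + t n • (u n - ustar)).2 - A (ustar + t n • (u n - ustar)).1
        = t n • ((u n).2 - A (u n).1) := by
      simp only [Prod.fst_add, Prod.snd_add, Prod.smul_fst, Prod.smul_snd, Prod.fst_sub,
        Prod.snd_sub, map_add, map_smul, map_sub, ← hyA]
      module
    rw [hscale, norm_smul, Real.norm_of_nonneg (ht n).1]
    exact (mul_le_of_le_one_left (norm_nonneg _) (ht n).2).trans (hu n).2.2.1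
  exact sub_eq_zero.1 <| tendsto_nhds_unique
    (hz.snd_nhds.sub ((A.continuous.tendsto _).comp hz.fst_nhds)) hresidual

theorem tendsto_of_unique [ProperSpace E₁] [ProperSpace E₂]
    (hu : GenApproxSeq C Q A pstar r f g p u)
    (hf : RegularPerturbation C f pstar r) (hg : RegularPerturbation Q g pstar r) (hr : 0 ≤ r)
    (hCcl : IsClosed C) (hCcv : Convex ℝ C) (hQcl : IsClosed Q) (hQcv : Convex ℝ Q)
    {ustar : E₁ × E₂} (hstar : ustar ∈ SEPSol C Q A (f pstar) (g pstar))
    (huniq : ∀ v ∈ SEPSol C Q A (f pstar) (g pstar), v = ustar) :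
    Tendsto u atTop (𝓝 ustar) := by
  by_contra hnot
  obtain ⟨s, hs, hfreq⟩ := not_tendsto_iff_exists_frequently_notMem.1 hnot
  obtain ⟨η, hη, hball⟩ := Metric.mem_nhds_iff.1 hs
  obtain ⟨φ, hφ, hfar⟩ : ∃ φ : ℕ → ℕ, StrictMono φ ∧ ∀ n, η ≤ ‖u (φ n) - ustar‖ :=
    extraction_of_frequently_atTop <| hfreq.mono fun n hn =>
      not_lt.1 fun h => hn (hball (mem_ball_iff_norm.2 h))
  set t : ℕ → ℝ := fun n => η / ‖u (φ n) - ustar‖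
  have ht : ∀ n, t n ∈ Icc (0 : ℝ) 1 := fun n =>
    ⟨by positivity, div_le_one_of_le₀ (hfar n) (norm_nonneg _)⟩
  have hsphere : ∀ n, ustar + t n • (u (φ n) - ustar) ∈ sphere ustar η := fun n => by
    rw [mem_sphere_iff_norm, add_sub_cancel_left, norm_smul, Real.norm_of_nonneg (ht n).1,
      div_mul_cancel₀ _ (hη.trans_le (hfar n)).ne']
  obtain ⟨⟨τ, z⟩, ⟨-, hz⟩, ψ, hψ, hlim⟩ :=
    (isCompact_Icc.prod (isCompact_sphere ustar η)).tendsto_subseq fun n =>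
      mk_mem_prod (ht n) (hsphere n)
  have hzsol := (hu.comp (hφ.comp hψ).tendsto_atTop).mem_SEPSol_of_tendsto_rescaled hf hg hr
    hCcl hCcv hQcl hQcv hstar (fun n => ht (ψ n)) hlim.fst_nhds hlim.snd_nhds
  have hzη := mem_sphere_iff_norm.1 hz
  rw [huniq z hzsol, sub_self, norm_zero] at hzη
  exact hη.ne hzη

end GenApproxSeq

theorem sep_lp_wellposed_iff_existsUnique_general
    {E₁ E₂ N : Type*} [NormedAddCommGroup E₁] [NormedSpace ℝ E₁]
    [NormedAddCommGroup E₂] [NormedSpace ℝ E₂]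
    [NormedAddCommGroup N] [NormedSpace ℝ N]
    (C : Set E₁) (Q : Set E₂) (hCcl : IsClosed C) (hCcv : Convex ℝ C)
    (hQcl : IsClosed Q) (hQcv : Convex ℝ Q)
    (A : E₁ →L[ℝ] E₂) (pstar : N) (r : ℝ) (hr : 0 < r)
    (ftil : N → E₁ → E₁ → ℝ) (gtil : N → E₂ → E₂ → ℝ)
    [FiniteDimensional ℝ E₁] [FiniteDimensional ℝ E₂]
    (hfhemi : ∀ x y : E₁,
      limsup (fun t : ℝ => ftil pstar (x + t • (y - x)) y) (𝓝[>] (0 : ℝ)) ≤ ftil pstar x y)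
    (hghemi : ∀ x y : E₂,
      limsup (fun t : ℝ => gtil pstar (x + t • (y - x)) y) (𝓝[>] (0 : ℝ)) ≤ gtil pstar x y)
    (hfmono : ∀ p : N, ‖p - pstar‖ ≤ r → ∀ x y : E₁, ftil p x y + ftil p y x ≤ 0)
    (hgmono : ∀ p : N, ‖p - pstar‖ ≤ r → ∀ x y : E₂, gtil p x y + gtil p y x ≤ 0)
    (hfconv : ∀ p : N, ‖p - pstar‖ ≤ r → ∀ x : E₁, ConvexOn ℝ Set.univ (ftil p x))
    (hgconv : ∀ p : N, ‖p - pstar‖ ≤ r → ∀ y : E₂, ConvexOn ℝ Set.univ (gtil p y))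
    (hfdiag : ∀ x ∈ C, 0 ≤ ftil pstar x x)
    (hgdiag : ∀ y ∈ Q, 0 ≤ gtil pstar y y)
    (hfcont : ∀ x : E₁, Continuous fun q : N × E₁ => ftil q.1 x q.2)
    (hgcont : ∀ y : E₂, Continuous fun q : N × E₂ => gtil q.1 y q.2) :
    LPWellPosedPerturb C Q A pstar r ftil gtil ↔
      ∃! u : E₁ × E₂, u ∈ SEPSol C Q A (ftil pstar) (gtil pstar) := by
  have hf : RegularPerturbation C ftil pstar r := ⟨hfhemi, hfmono, hfconv, hfdiag, hfcont⟩
  have hg : RegularPerturbation Q gtil pstar r := ⟨hghemi, hgmono, hgconv, hgdiag, hgcont⟩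
  constructor
  · rintro ⟨ustar, hS, -⟩
    exact ⟨ustar, eq_singleton_iff_unique_mem.1 hS⟩
  · rintro ⟨ustar, hstar, huniq⟩
    exact ⟨ustar, eq_singleton_iff_unique_mem.2 ⟨hstar, huniq⟩, fun p u hu =>
      hu.tendsto_of_unique hf hg hr.le hCcl hCcv hQcl hQcv hstar huniq⟩

/-- **Theorem 5.1.** In finite dimensions, under hemicontinuity, monotonicity, convexity,
diagonal nonnegativity and continuity assumptions on the perturbed bifunctions,
SEP(f,g,C,Q) is Levitin–Polyak well-posed by perturbations if and only if it has a
unique solution. -/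
theorem sep_lp_wellposed_iff_existsUnique
    {E₁ E₂ N : Type*} [NormedAddCommGroup E₁] [NormedSpace ℝ E₁] [CompleteSpace E₁]
    [NormedAddCommGroup E₂] [NormedSpace ℝ E₂] [CompleteSpace E₂]
    [NormedAddCommGroup N] [NormedSpace ℝ N]
    (C : Set E₁) (Q : Set E₂) (hCne : C.Nonempty) (hCcl : IsClosed C) (hCcv : Convex ℝ C)
    (hQne : Q.Nonempty) (hQcl : IsClosed Q) (hQcv : Convex ℝ Q)
    (A : E₁ →L[ℝ] E₂) (pstar : N) (r : ℝ) (hr : 0 < r)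
    (ftil : N → E₁ → E₁ → ℝ) (gtil : N → E₂ → E₂ → ℝ)
    [FiniteDimensional ℝ E₁] [FiniteDimensional ℝ E₂]
    (hfhemi : ∀ x y : E₁,
      limsup (fun t : ℝ => ftil pstar (x + t • (y - x)) y) (𝓝[>] (0 : ℝ)) ≤ ftil pstar x y)
    (hghemi : ∀ x y : E₂,
      limsup (fun t : ℝ => gtil pstar (x + t • (y - x)) y) (𝓝[>] (0 : ℝ)) ≤ gtil pstar x y)
    (hfmono : ∀ p : N, ‖p - pstar‖ ≤ r → ∀ x y : E₁, ftil p x y + ftil p y x ≤ 0)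
    (hgmono : ∀ p : N, ‖p - pstar‖ ≤ r → ∀ x y : E₂, gtil p x y + gtil p y x ≤ 0)
    (hfconv : ∀ p : N, ‖p - pstar‖ ≤ r → ∀ x : E₁, ConvexOn ℝ Set.univ (ftil p x))
    (hgconv : ∀ p : N, ‖p - pstar‖ ≤ r → ∀ y : E₂, ConvexOn ℝ Set.univ (gtil p y))
    (hfdiag : ∀ x ∈ C, 0 ≤ ftil pstar x x)
    (hgdiag : ∀ y ∈ Q, 0 ≤ gtil pstar y y)
    (hfcont : ∀ x : E₁, Continuous fun q : N × E₁ => ftil q.1 x q.2)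
    (hgcont : ∀ y : E₂, Continuous fun q : N × E₂ => gtil q.1 y q.2) :
    LPWellPosedPerturb C Q A pstar r ftil gtil ↔
      ∃! u : E₁ × E₂, u ∈ SEPSol C Q A (ftil pstar) (gtil pstar) :=
  sep_lp_wellposed_iff_existsUnique_general C Q hCcl hCcv hQcl hQcv A pstar r hr ftil gtil hfhemi
    hghemi hfmono hgmono hfconv hgconv hfdiag hgdiag hfcont hgcont
end

section
/- Let C be a convex subset of a real Banach space E and let h : C × C → ℝ be a monotone and hemicontinuous bifunction such that h(x,x) ≥ 0 for all x ∈ C and, for every x ∈ C, the function h(x,·) is convex on C. Then for a given x* ∈ C, one has h(x*,x) ≥ 0 for all x ∈ C if and only if h(x,x*) ≤ 0 for all x ∈ C. -/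
open Filter Metric Topology Set

/-- **Lemma 2.5 (Minty-type lemma).** Let C be a convex subset of a real Banach space and
let h be a monotone, hemicontinuous bifunction on C with h(x,x) ≥ 0 for all x ∈ C and
h(x,·) convex on C for every x ∈ C. Then for x* ∈ C, h(x*,x) ≥ 0 for all x ∈ C if and
only if h(x,x*) ≤ 0 for all x ∈ C. -/
theorem ep_minty_lemma
    {E : Type*} [NormedAddCommGroup E] [NormedSpace ℝ E] [CompleteSpace E]
    (C : Set E) (hCcv : Convex ℝ C) (h : E → E → ℝ)
    (hmono : ∀ x ∈ C, ∀ y ∈ C, h x y + h y x ≤ 0)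
    (hhemi : ∀ x ∈ C, ∀ y ∈ C,
      limsup (fun t : ℝ => h (x + t • (y - x)) y) (𝓝[>] (0 : ℝ)) ≤ h x y)
    (hdiag : ∀ x ∈ C, 0 ≤ h x x)
    (hconv : ∀ x ∈ C, ConvexOn ℝ C (h x))
    (xstar : E) (hxstar : xstar ∈ C) :
    (∀ x ∈ C, 0 ≤ h xstar x) ↔ (∀ x ∈ C, h x xstar ≤ 0) := by
  constructor
  · intro H x hx
    have := hmono x hx xstar hxstar
    have := H x hx
    linarith
  · intro H y hy
    -- key: for t ∈ (0,1], h (xstar + t•(y-xstar)) y ≥ 0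
    have key : ∀ t : ℝ, 0 < t → t ≤ 1 → 0 ≤ h (xstar + t • (y - xstar)) y := by
      intro t ht ht1
      set z := xstar + t • (y - xstar) with hz
      have hzC : z ∈ C := by
        have : z = (1 - t) • xstar + t • y := by
          rw [hz]; rw [smul_sub]; module
        rw [this]
        exact hCcv hxstar hy (by linarith) ht.le (by ring)
      have hcv := (hconv z hzC).2 hxstar hy (by linarith : (0:ℝ) ≤ 1 - t) ht.le
        (by ring : (1 - t) + t = 1)
      have hzz : z = (1 - t) • xstar + t • y := by
        rw [hz]; rw [smul_sub]; module
      rw [← hzz] at hcv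
      have h1 : 0 ≤ h z z := hdiag z hzC
      have h2 : h z xstar ≤ 0 := H z hzC
      simp only [smul_eq_mul] at hcv
      nlinarith
    have hev : ∀ᶠ t : ℝ in 𝓝[>] (0:ℝ), 0 ≤ h (xstar + t • (y - xstar)) y := by
      filter_upwards [Ioc_mem_nhdsGT (by norm_num : (0:ℝ) < 1)] with t ht
      exact key t ht.1 ht.2
    have hls : (0:ℝ) ≤ limsup (fun t : ℝ => h (xstar + t • (y - xstar)) y) (𝓝[>] (0:ℝ)) := by
      rw [limsup_eq]
      apply Real.sInf_nonneg
      intro a ha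
      simp only [Set.mem_setOf_eq] at ha
      obtain ⟨t, h0, h1⟩ := (hev.and ha).exists
      linarith
    exact hls.trans (hhemi xstar hxstar y hy)
end

section
/- If the split equilibrium problem SEP(f,g,C,Q) is Levitin–Polyak well-posed by perturbations in the generalized sense, then its solution set S is compact. -/
open Filter Metric Topology Set

/-- If SEP(f,g,C,Q) is Levitin–Polyak well-posed by perturbations in the generalized
sense, then its solution set is compact. -/
theorem sep_gen_lp_wellposed_isCompact_sol
    {E₁ E₂ N : Type*} [NormedAddCommGroup E₁] [NormedSpace ℝ E₁] [CompleteSpace E₁]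
    [NormedAddCommGroup E₂] [NormedSpace ℝ E₂] [CompleteSpace E₂]
    [NormedAddCommGroup N] [NormedSpace ℝ N]
    (C : Set E₁) (Q : Set E₂) (hCne : C.Nonempty) (hCcl : IsClosed C) (hCcv : Convex ℝ C)
    (hQne : Q.Nonempty) (hQcl : IsClosed Q) (hQcv : Convex ℝ Q)
    (A : E₁ →L[ℝ] E₂) (pstar : N) (r : ℝ) (hr : 0 < r)
    (ftil : N → E₁ → E₁ → ℝ) (gtil : N → E₂ → E₂ → ℝ)
    (hwp : GenLPWellPosedPerturb C Q A pstar r ftil gtil) :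
    IsCompact (SEPSol C Q A (ftil pstar) (gtil pstar)) := by
  apply IsSeqCompact.isCompact
  intro u hu
  have hga : GenApproxSeq C Q A pstar r ftil gtil (fun _ => pstar) u := by
    refine ⟨fun n => by simp [hr.le], tendsto_const_nhds,
      fun n => 1 / (n + 1 : ℝ), fun n => by positivity,
      tendsto_one_div_add_atTop_nhds_zero_nat, fun n => ?_⟩
    obtain ⟨h1, h2, h3, h4, h5⟩ := hu n
    have hpos : (0 : ℝ) ≤ 1 / (n + 1 : ℝ) := by positivity
    refine ⟨?_, ?_, ?_, fun x hx => ?_, fun y hy => ?_⟩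
    · rw [infDist_zero_of_mem h1]; exact hpos
    · rw [infDist_zero_of_mem h2]; exact hpos
    · rw [h3]; simpa using hpos
    · linarith [h4 x hx]
    · linarith [h5 y hy]
  obtain ⟨ustar, hus, φ, hφ, hconv⟩ := hwp.2 (fun _ => pstar) u hga
  exact ⟨ustar, hus, φ, hφ, hconv⟩
end

section
/- Assume the parameter space N is finite-dimensional and that for each (x,y) ∈ E₁ × E₂ the functions (p,z) ↦ f̃(p,z,x) and (p,w) ↦ g̃(p,w,y) are upper semi-continuous (jointly in their first two variables). Then for every ε > 0 the approximate solution set S(ε) is a closed subset of E₁ × E₂. -/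
open Filter Metric Topology Set

/-- If the parameter space is finite-dimensional and the perturbed bifunctions are upper
semicontinuous in their first two variables, then S(ε) is closed for every ε > 0. -/
theorem sep_approxSol_isClosed
    {E₁ E₂ N : Type*} [NormedAddCommGroup E₁] [NormedSpace ℝ E₁] [CompleteSpace E₁]
    [NormedAddCommGroup E₂] [NormedSpace ℝ E₂] [CompleteSpace E₂]
    [NormedAddCommGroup N] [NormedSpace ℝ N]
    (C : Set E₁) (Q : Set E₂) (hCne : C.Nonempty) (hCcl : IsClosed C) (hCcv : Convex ℝ C)
    (hQne : Q.Nonempty) (hQcl : IsClosed Q) (hQcv : Convex ℝ Q)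
    (A : E₁ →L[ℝ] E₂) (pstar : N) (r : ℝ) (hr : 0 < r)
    (ftil : N → E₁ → E₁ → ℝ) (gtil : N → E₂ → E₂ → ℝ)
    [FiniteDimensional ℝ N]
    (hfusc : ∀ x : E₁, UpperSemicontinuous fun q : N × E₁ => ftil q.1 q.2 x)
    (hgusc : ∀ y : E₂, UpperSemicontinuous fun q : N × E₂ => gtil q.1 q.2 y) :
    ∀ ε : ℝ, 0 < ε → IsClosed (approxSol C Q A pstar r ftil gtil ε) := by
  intro ε hε
  have _ : ProperSpace N := FiniteDimensional.proper ℝ N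
  apply IsSeqClosed.isClosed
  intro u L hu hL
  choose p hpr hpε h1 h2 h3 h4 h5 using hu
  have hmem : ∀ n, p n ∈ closedBall pstar (min r ε) := by
    intro n; rw [mem_closedBall, dist_eq_norm]; exact le_min (hpr n) (hpε n)
  obtain ⟨q, hq, φ, hφ, hpq⟩ :=
    (isCompact_closedBall pstar (min r ε)).tendsto_subseq hmem
  rw [mem_closedBall, dist_eq_norm] at hq
  have hLφ : Tendsto (fun n => u (φ n)) atTop (nhds L) := hL.comp hφ.tendsto_atTop
  have hL1 : Tendsto (fun n => (u (φ n)).1) atTop (nhds L.1) :=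
    (continuous_fst.tendsto L).comp hLφ
  have hL2 : Tendsto (fun n => (u (φ n)).2) atTop (nhds L.2) :=
    (continuous_snd.tendsto L).comp hLφ
  refine ⟨q, le_trans hq (min_le_left _ _), le_trans hq (min_le_right _ _), ?_, ?_, ?_, ?_, ?_⟩
  · exact le_of_tendsto (((continuous_infDist_pt C).tendsto L.1).comp hL1)
      (Eventually.of_forall fun n => h1 (φ n))
  · exact le_of_tendsto (((continuous_infDist_pt Q).tendsto L.2).comp hL2)
      (Eventually.of_forall fun n => h2 (φ n))
  · have hc : Tendsto (fun n => ‖(u (φ n)).2 - A (u (φ n)).1‖) atTop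
        (nhds ‖L.2 - A L.1‖) :=
      ((continuous_norm.comp (continuous_snd.sub (A.continuous.comp continuous_fst))).tendsto
        L).comp hLφ
    exact le_of_tendsto hc (Eventually.of_forall fun n => h3 (φ n))
  · intro x hx
    by_contra h
    push_neg at h
    have husc := hfusc x (q, L.1) (-ε) h
    have htd : Tendsto (fun n => (p (φ n), (u (φ n)).1)) atTop (nhds (q, L.1)) :=
      hpq.prodMk_nhds hL1
    obtain ⟨n, hn⟩ := (htd.eventually husc).exists
    exact absurd (h4 (φ n) x hx) (not_le.mpr hn)
  · intro y hy
    by_contra h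
    push_neg at h
    have husc := hgusc y (q, L.2) (-ε) h
    have htd : Tendsto (fun n => (p (φ n), (u (φ n)).2)) atTop (nhds (q, L.2)) :=
      hpq.prodMk_nhds hL2
    obtain ⟨n, hn⟩ := (htd.eventually husc).exists
    exact absurd (h5 (φ n) y hy) (not_le.mpr hn)
end

section
/- Assume the parameter space N is finite-dimensional and that for each (x,y) ∈ E₁ × E₂ the functions (p,z) ↦ f̃(p,z,x) and (p,w) ↦ g̃(p,w,y) are upper semi-continuous (jointly in their first two variables). Then the solution set of SEP(f,g,C,Q) equals the intersection of the approximate solution sets: S = ⋂_{ε>0} S(ε). -/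
open Filter Metric Topology Set

/-!
A solution lies in every `S(ε)`, witnessed by the parameter `p*` itself. Conversely, if `(z, w)`
lies in every `S(ε)`, the distances `d(z, C)`, `d(w, Q)`, `‖w - A z‖` vanish, so closedness puts
`(z, w)` in `C × Q` with `w = A z`; and since `(z, w)` stays fixed while the parameters `p_ε` tend
to `p*`, upper semicontinuity of `p ↦ f̃(p, z, x)` at `p*` turns `f̃(p_ε, z, x) ≥ -ε` into
`f(z, x) ≥ 0`, and likewise for `g`.
-/

theorem UpperSemicontinuousAt.le_of_forall_exists_dist_le {X : Type*} [PseudoMetricSpace X]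
    {f : X → ℝ} {x : X} {c : ℝ} (hf : UpperSemicontinuousAt f x)
    (h : ∀ ε > 0, ∃ y, dist y x ≤ ε ∧ c - ε ≤ f y) : c ≤ f x := by
  by_contra! hlt
  obtain ⟨δ, hδ, hball⟩ := Metric.eventually_nhds_iff.1 (hf ((f x + c) / 2) (by linarith))
  obtain ⟨y, hyx, hy⟩ := h (min (δ / 2) ((c - f x) / 2)) (lt_min (half_pos hδ) (by linarith))
  have hfy : f y < (f x + c) / 2 :=
    hball ((hyx.trans (min_le_left _ _)).trans_lt (half_lt_self hδ))
  linarith [min_le_right (δ / 2) ((c - f x) / 2)]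

theorem Metric.mem_of_forall_infDist_le {X : Type*} [PseudoMetricSpace X] {s : Set X} {x : X}
    (hs : IsClosed s) (hne : s.Nonempty) (h : ∀ ε > 0, infDist x s ≤ ε) : x ∈ s :=
  (hs.mem_iff_infDist_zero hne).2 <|
    le_antisymm (le_of_forall_gt_imp_ge_of_dense h) infDist_nonneg

theorem nonneg_of_upperSemicontinuousAt_of_approx {N X : Type*} [SeminormedAddCommGroup N]
    [PseudoMetricSpace X] {φ : N → X → ℝ} {pstar : N} {z : X}
    (hφ : UpperSemicontinuousAt (fun q : N × X => φ q.1 q.2) (pstar, z))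
    (h : ∀ ε > 0, ∃ p : N, ‖p - pstar‖ ≤ ε ∧ -ε ≤ φ p z) : 0 ≤ φ pstar z := by
  have hcomp : UpperSemicontinuousAt (fun p => φ p z) pstar :=
    hφ.comp (f := fun q : N × X => φ q.1 q.2) (g := fun p => (p, z))
      (continuous_id.prodMk continuous_const).continuousAt
  refine hcomp.le_of_forall_exists_dist_le fun ε hε => ?_
  obtain ⟨p, hp, hφp⟩ := h ε hε
  exact ⟨p, by rwa [dist_eq_norm], by simpa using hφp⟩

section SplitEquilibrium

variable {E₁ E₂ N : Type*} [NormedAddCommGroup E₁] [NormedSpace ℝ E₁]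
  [NormedAddCommGroup E₂] [NormedSpace ℝ E₂] [NormedAddCommGroup N] [NormedSpace ℝ N]
  {C : Set E₁} {Q : Set E₂} {A : E₁ →L[ℝ] E₂} {pstar : N} {r : ℝ}
  {ftil : N → E₁ → E₁ → ℝ} {gtil : N → E₂ → E₂ → ℝ}

theorem sepSol_subset_approxSol {ε : ℝ} (hr : 0 ≤ r) (hε : 0 ≤ ε) :
    SEPSol C Q A (ftil pstar) (gtil pstar) ⊆ approxSol C Q A pstar r ftil gtil ε := by
  rintro u ⟨hC, hQ, hA, hf, hg⟩
  refine ⟨pstar, by simpa using hr, by simpa using hε, ?_, ?_, ?_, ?_, ?_⟩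
  · simpa [infDist_zero_of_mem hC] using hε
  · simpa [infDist_zero_of_mem hQ] using hε
  · simpa [hA] using hε
  · exact fun x hx => (neg_nonpos.2 hε).trans (hf x hx)
  · exact fun y hy => (neg_nonpos.2 hε).trans (hg y hy)

theorem iInter_approxSol_subset_sepSol (hCne : C.Nonempty) (hCcl : IsClosed C)
    (hQne : Q.Nonempty) (hQcl : IsClosed Q)
    (hfusc : ∀ x : E₁, UpperSemicontinuous fun q : N × E₁ => ftil q.1 q.2 x)
    (hgusc : ∀ y : E₂, UpperSemicontinuous fun q : N × E₂ => gtil q.1 q.2 y) :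
    ⋂ ε > (0 : ℝ), approxSol C Q A pstar r ftil gtil ε ⊆
      SEPSol C Q A (ftil pstar) (gtil pstar) := by
  intro u hu
  simp only [mem_iInter] at hu
  choose p _ hp hdC hdQ hA hf hg using hu
  refine ⟨mem_of_forall_infDist_le hCcl hCne hdC, mem_of_forall_infDist_le hQcl hQne hdQ,
    eq_of_forall_dist_le fun ε hε => (dist_eq_norm _ _).trans_le (hA ε hε), ?_, ?_⟩
  · exact fun x hx => nonneg_of_upperSemicontinuousAt_of_approx
      (φ := fun p z => ftil p z x) (hfusc x _) fun ε hε => ⟨p ε hε, hp ε hε, hf ε hε x hx⟩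
  · exact fun y hy => nonneg_of_upperSemicontinuousAt_of_approx
      (φ := fun p w => gtil p w y) (hgusc y _) fun ε hε => ⟨p ε hε, hp ε hε, hg ε hε y hy⟩

end SplitEquilibrium

theorem sep_sol_eq_iInter_approxSol_general
    {E₁ E₂ N : Type*} [NormedAddCommGroup E₁] [NormedSpace ℝ E₁]
    [NormedAddCommGroup E₂] [NormedSpace ℝ E₂]
    [NormedAddCommGroup N] [NormedSpace ℝ N]
    (C : Set E₁) (Q : Set E₂) (hCne : C.Nonempty) (hCcl : IsClosed C)
    (hQne : Q.Nonempty) (hQcl : IsClosed Q)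
    (A : E₁ →L[ℝ] E₂) (pstar : N) (r : ℝ) (hr : 0 < r)
    (ftil : N → E₁ → E₁ → ℝ) (gtil : N → E₂ → E₂ → ℝ)
    (hfusc : ∀ x : E₁, UpperSemicontinuous fun q : N × E₁ => ftil q.1 q.2 x)
    (hgusc : ∀ y : E₂, UpperSemicontinuous fun q : N × E₂ => gtil q.1 q.2 y) :
    SEPSol C Q A (ftil pstar) (gtil pstar) =
      ⋂ ε > (0 : ℝ), approxSol C Q A pstar r ftil gtil ε :=
  Subset.antisymm (subset_iInter₂ fun _ hε => sepSol_subset_approxSol hr.le hε.le)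
    (iInter_approxSol_subset_sepSol hCne hCcl hQne hQcl hfusc hgusc)

/-- If the parameter space is finite-dimensional and the perturbed bifunctions are upper
semicontinuous in their first two variables, then the solution set equals the
intersection of all the approximate solution sets: S = ⋂_{ε>0} S(ε). -/
theorem sep_sol_eq_iInter_approxSol
    {E₁ E₂ N : Type*} [NormedAddCommGroup E₁] [NormedSpace ℝ E₁] [CompleteSpace E₁]
    [NormedAddCommGroup E₂] [NormedSpace ℝ E₂] [CompleteSpace E₂]
    [NormedAddCommGroup N] [NormedSpace ℝ N]
    (C : Set E₁) (Q : Set E₂) (hCne : C.Nonempty) (hCcl : IsClosed C) (hCcv : Convex ℝ C)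
    (hQne : Q.Nonempty) (hQcl : IsClosed Q) (hQcv : Convex ℝ Q)
    (A : E₁ →L[ℝ] E₂) (pstar : N) (r : ℝ) (hr : 0 < r)
    (ftil : N → E₁ → E₁ → ℝ) (gtil : N → E₂ → E₂ → ℝ)
    [FiniteDimensional ℝ N]
    (hfusc : ∀ x : E₁, UpperSemicontinuous fun q : N × E₁ => ftil q.1 q.2 x)
    (hgusc : ∀ y : E₂, UpperSemicontinuous fun q : N × E₂ => gtil q.1 q.2 y) :
    SEPSol C Q A (ftil pstar) (gtil pstar) =
      ⋂ ε > (0 : ℝ), approxSol C Q A pstar r ftil gtil ε :=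
  sep_sol_eq_iInter_approxSol_general C Q hCne hCcl hQne hQcl A pstar r hr ftil gtil hfusc hgusc
end

section
/- If the solution set S of SEP(f,g,C,Q) is nonempty and compact and the Hausdorff distance H(S(ε), S) → 0 as ε → 0⁺, then every generalized approximating sequence corresponding to any sequence {pₙ} ⊆ M with pₙ → p* has a subsequence converging to some element of S; in particular, SEP(f,g,C,Q) is Levitin–Polyak well-posed by perturbations in the generalized sense. -/
open Filter Metric Topology Set

/-!
Along a generalized approximating sequence the tolerances `εₙ` and the parameter gaps
`‖pₙ - p*‖` both tend to `0`, so with `δₙ` their maximum the `n`-th term lies in `S(δₙ)`.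
Hence its distance to `S` is at most `H(S(δₙ), S) → 0`; projecting onto the compact set `S`
and extracting a convergent subsequence of the projections gives the claim.
-/

theorem Metric.tendsto_infEDist_of_tendsto_hausdorffEDist {X ι : Type*} [PseudoEMetricSpace X]
    {l : Filter ι} {T : ι → Set X} {K : Set X} {x : ι → X} (hx : ∀ i, x i ∈ T i)
    (hT : Tendsto (fun i => hausdorffEDist (T i) K) l (𝓝 0)) :
    Tendsto (fun i => infEDist (x i) K) l (𝓝 0) :=
  tendsto_of_tendsto_of_tendsto_of_le_of_le tendsto_const_nhds hT (fun _ => zero_le)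
    fun i => infEDist_le_hausdorffEDist_of_mem (hx i)

theorem IsCompact.exists_tendsto_subseq_of_tendsto_infEDist {X : Type*} [PseudoEMetricSpace X]
    {K : Set X} (hK : IsCompact K) (hne : K.Nonempty) {u : ℕ → X}
    (hu : Tendsto (fun n => infEDist (u n) K) atTop (𝓝 0)) :
    ∃ a ∈ K, ∃ φ : ℕ → ℕ, StrictMono φ ∧ Tendsto (u ∘ φ) atTop (𝓝 a) := by
  choose s hsK hs using fun n => hK.exists_infEDist_eq_edist hne (u n)
  obtain ⟨a, haK, φ, hφ, hsφ⟩ := hK.tendsto_subseq hsK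
  refine ⟨a, haK, φ, hφ, tendsto_iff_edist_tendsto_0.2 ?_⟩
  have hus : Tendsto (fun n => edist (u (φ n)) (s (φ n))) atTop (𝓝 0) := by
    simpa only [hs, Function.comp_def] using hu.comp hφ.tendsto_atTop
  have hsum := hus.add (tendsto_iff_edist_tendsto_0.1 hsφ)
  rw [add_zero] at hsum
  exact tendsto_of_tendsto_of_tendsto_of_le_of_le tendsto_const_nhds hsum (fun _ => zero_le)
    fun n => edist_triangle _ _ _

theorem GenApproxSeq.exists_tendsto_mem_approxSol {E₁ E₂ N : Type*}
    [NormedAddCommGroup E₁] [NormedSpace ℝ E₁] [NormedAddCommGroup E₂] [NormedSpace ℝ E₂]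
    [NormedAddCommGroup N] [NormedSpace ℝ N] {C : Set E₁} {Q : Set E₂} {A : E₁ →L[ℝ] E₂}
    {pstar : N} {r : ℝ} {ft : N → E₁ → E₁ → ℝ} {gt : N → E₂ → E₂ → ℝ} {p : ℕ → N}
    {u : ℕ → E₁ × E₂} (hu : GenApproxSeq C Q A pstar r ft gt p u) :
    ∃ δ : ℕ → ℝ, Tendsto δ atTop (𝓝[>] 0) ∧ ∀ n, u n ∈ approxSol C Q A pstar r ft gt (δ n) := by
  obtain ⟨hpr, hp, ε, hεpos, hε, hu⟩ := hu
  refine ⟨fun n => max (ε n) ‖p n - pstar‖, ?_, fun n => ?_⟩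
  · have hgap : Tendsto (fun n => ‖p n - pstar‖) atTop (𝓝 0) :=
      tendsto_iff_norm_sub_tendsto_zero.1 hp
    refine tendsto_nhdsWithin_of_tendsto_nhds_of_eventually_within _ ?_
      (Eventually.of_forall fun n => lt_max_of_lt_left (hεpos n))
    simpa only [max_self] using hε.max hgap
  · obtain ⟨hC, hQ, hA, hf, hg⟩ := hu n
    have hεδ := le_max_left (ε n) ‖p n - pstar‖
    exact ⟨p n, hpr n, le_max_right _ _, hC.trans hεδ, hQ.trans hεδ, hA.trans hεδ,
      fun x hx => (neg_le_neg hεδ).trans (hf x hx), fun y hy => (neg_le_neg hεδ).trans (hg y hy)⟩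

theorem sep_gen_lp_wellposed_of_compact_hausdorff_general
    {E₁ E₂ N : Type*} [NormedAddCommGroup E₁] [NormedSpace ℝ E₁]
    [NormedAddCommGroup E₂] [NormedSpace ℝ E₂]
    [NormedAddCommGroup N] [NormedSpace ℝ N]
    (C : Set E₁) (Q : Set E₂)
    (A : E₁ →L[ℝ] E₂) (pstar : N) (r : ℝ)
    (ftil : N → E₁ → E₁ → ℝ) (gtil : N → E₂ → E₂ → ℝ)
    (hSne : (SEPSol C Q A (ftil pstar) (gtil pstar)).Nonempty)
    (hScomp : IsCompact (SEPSol C Q A (ftil pstar) (gtil pstar)))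
    (hH : Tendsto (fun ε : ℝ => EMetric.hausdorffEdist
        (approxSol C Q A pstar r ftil gtil ε) (SEPSol C Q A (ftil pstar) (gtil pstar)))
      (𝓝[>] (0 : ℝ)) (nhds 0)) :
    (∀ (p : ℕ → N) (u : ℕ → E₁ × E₂), GenApproxSeq C Q A pstar r ftil gtil p u →
      ∃ ustar ∈ SEPSol C Q A (ftil pstar) (gtil pstar), ∃ φ : ℕ → ℕ, StrictMono φ ∧
        Tendsto (u ∘ φ) atTop (nhds ustar)) ∧
    GenLPWellPosedPerturb C Q A pstar r ftil gtil := by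
  have hsubseq : ∀ (p : ℕ → N) (u : ℕ → E₁ × E₂), GenApproxSeq C Q A pstar r ftil gtil p u →
      ∃ ustar ∈ SEPSol C Q A (ftil pstar) (gtil pstar), ∃ φ : ℕ → ℕ, StrictMono φ ∧
        Tendsto (u ∘ φ) atTop (nhds ustar) := fun p u hu => by
    obtain ⟨δ, hδ, hmem⟩ := hu.exists_tendsto_mem_approxSol
    exact hScomp.exists_tendsto_subseq_of_tendsto_infEDist hSne
      (tendsto_infEDist_of_tendsto_hausdorffEDist hmem (hH.comp hδ))
  exact ⟨hsubseq, hSne, hsubseq⟩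

/-- If the solution set S of SEP(f,g,C,Q) is nonempty and compact and H(S(ε),S) → 0 as
ε → 0⁺, then every generalized approximating sequence has a subsequence converging to
some element of S; in particular, SEP(f,g,C,Q) is Levitin–Polyak well-posed by
perturbations in the generalized sense. -/
theorem sep_gen_lp_wellposed_of_compact_hausdorff
    {E₁ E₂ N : Type*} [NormedAddCommGroup E₁] [NormedSpace ℝ E₁] [CompleteSpace E₁]
    [NormedAddCommGroup E₂] [NormedSpace ℝ E₂] [CompleteSpace E₂]
    [NormedAddCommGroup N] [NormedSpace ℝ N]
    (C : Set E₁) (Q : Set E₂) (hCne : C.Nonempty) (hCcl : IsClosed C) (hCcv : Convex ℝ C)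
    (hQne : Q.Nonempty) (hQcl : IsClosed Q) (hQcv : Convex ℝ Q)
    (A : E₁ →L[ℝ] E₂) (pstar : N) (r : ℝ) (hr : 0 < r)
    (ftil : N → E₁ → E₁ → ℝ) (gtil : N → E₂ → E₂ → ℝ)
    (hSne : (SEPSol C Q A (ftil pstar) (gtil pstar)).Nonempty)
    (hScomp : IsCompact (SEPSol C Q A (ftil pstar) (gtil pstar)))
    (hH : Tendsto (fun ε : ℝ => EMetric.hausdorffEdist
        (approxSol C Q A pstar r ftil gtil ε) (SEPSol C Q A (ftil pstar) (gtil pstar)))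
      (𝓝[>] (0 : ℝ)) (nhds 0)) :
    (∀ (p : ℕ → N) (u : ℕ → E₁ × E₂), GenApproxSeq C Q A pstar r ftil gtil p u →
      ∃ ustar ∈ SEPSol C Q A (ftil pstar) (gtil pstar), ∃ φ : ℕ → ℕ, StrictMono φ ∧
        Tendsto (u ∘ φ) atTop (nhds ustar)) ∧
    GenLPWellPosedPerturb C Q A pstar r ftil gtil :=
  sep_gen_lp_wellposed_of_compact_hausdorff_general C Q A pstar r ftil gtil hSne hScomp hH
end
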